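/- The waterfilling function R* is submodular: for all S, T ⊆ U, R*(S) + R*(T) ≥ R*(S∩T) + R*(S∪T). -/

import Mathlib

/-!
Water-filling maximises the concave rate `∑ log (1 + pᵢ / Nᵢ)` under `∑ pᵢ = P`. By weak duality,
for every water level `μ > 0`, `R*(A) ≤ D_A(μ) = ∑_{i ∈ A} h_i(μ) + P / μ`, where `h_i(μ)` is the
rate of channel `i` at level `μ` minus its power divided by `μ`; equality holds at `μ = ν(A)`, and
each `h_i` is nondecreasing in `μ`. If `ν(S) ≤ ν(T)`, evaluate the dual of `S ∪ T` at `ν(S)` and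
that of `S ∩ T` at `ν(T)`: they differ from the duals of `S` and `T` by sums of `h_i` over `T \ S`,
which cancel up to a nonpositive error by monotonicity.
-/

open Finset

noncomputable section

def waterPower (N w : ℝ) : ℝ := max (w - N) 0

def waterRate (N w : ℝ) : ℝ := Real.log (1 + waterPower N w / N)

def dualTerm (N μ : ℝ) : ℝ := waterRate N μ - waterPower N μ / μ

/-- The Lagrangian dual of the water-filling problem on `A` at water level `μ`
(Lagrange multiplier `1 / μ`). -/
def dualBound {ι : Type*} (N : ι → ℝ) (P : ℝ) (A : Finset ι) (μ : ℝ) : ℝ :=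
  ∑ i ∈ A, dualTerm (N i) μ + P / μ

end

lemma waterPower_nonneg (N w : ℝ) : 0 ≤ waterPower N w := le_max_right _ _

lemma waterPower_eq_zero_of_le {N w : ℝ} (h : w ≤ N) : waterPower N w = 0 :=
  max_eq_right (sub_nonpos.mpr h)

lemma waterPower_eq_sub_of_le {N w : ℝ} (h : N ≤ w) : waterPower N w = w - N :=
  max_eq_left (sub_nonneg.mpr h)

lemma log_one_add_div_sub_log_one_add_div_le {N p q : ℝ} (hN : 0 < N) (hp : 0 ≤ p) (hq : 0 ≤ q) :
    Real.log (1 + p / N) - Real.log (1 + q / N) ≤ (p - q) / (N + q) := by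
  have ha : 0 < 1 + p / N := by positivity
  have hb : 0 < 1 + q / N := by positivity
  calc Real.log (1 + p / N) - Real.log (1 + q / N)
      = Real.log ((1 + p / N) / (1 + q / N)) := (Real.log_div ha.ne' hb.ne').symm
    _ ≤ (1 + p / N) / (1 + q / N) - 1 := Real.log_le_sub_one_of_pos (div_pos ha hb)
    _ = (p - q) / (N + q) := by field_simp; ring

/-- Concavity of the rate at the optimal power for water level `μ`, with slope at most `1 / μ`. -/
lemma waterRate_sub_waterRate_le {N μ : ℝ} (hN : 0 < N) (hμ : 0 < μ) (w : ℝ) :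
    waterRate N w - waterRate N μ ≤ (waterPower N w - waterPower N μ) / μ := by
  refine (log_one_add_div_sub_log_one_add_div_le hN (waterPower_nonneg N w)
    (waterPower_nonneg N μ)).trans ?_
  rcases le_total μ N with hμN | hNμ
  · rw [waterPower_eq_zero_of_le hμN, sub_zero, add_zero]
    exact div_le_div_of_nonneg_left (waterPower_nonneg N w) hμ hμN
  · rw [waterPower_eq_sub_of_le hNμ, add_sub_cancel]

lemma dualTerm_mono {N a b : ℝ} (hN : 0 < N) (ha : 0 < a) (hab : a ≤ b) :
    dualTerm N a ≤ dualTerm N b := by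
  have hrate := waterRate_sub_waterRate_le hN (ha.trans_le hab) a
  have hpow : waterPower N a / b ≤ waterPower N a / a :=
    div_le_div_of_nonneg_left (waterPower_nonneg N a) ha hab
  rw [sub_div] at hrate
  unfold dualTerm
  linarith

lemma pos_of_sum_waterPower_pos {ι : Type*} {N : ι → ℝ} (hN : ∀ i, 0 < N i) {A : Finset ι}
    {w : ℝ} (h : 0 < ∑ i ∈ A, waterPower (N i) w) : 0 < w := by
  by_contra! hw
  rw [sum_eq_zero fun i _ => waterPower_eq_zero_of_le (hw.trans (hN i).le)] at h
  exact h.false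

section Duality

variable {ι : Type*} (N : ι → ℝ) (P : ℝ)

lemma sum_waterRate_le_dualBound (hN : ∀ i, 0 < N i) (A : Finset ι) {μ w : ℝ} (hμ : 0 < μ)
    (hw : ∑ i ∈ A, waterPower (N i) w ≤ P) :
    ∑ i ∈ A, waterRate (N i) w ≤ dualBound N P A μ := by
  have hrate := sum_le_sum fun i (_ : i ∈ A) => waterRate_sub_waterRate_le (hN i) hμ w
  have hbudget := div_le_div_of_nonneg_right hw hμ.le
  simp only [sum_sub_distrib, ← sum_div, sub_div] at hrate hbudget
  simp only [dualBound, dualTerm, sum_sub_distrib, ← sum_div]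
  linarith

lemma dualBound_eq_sum_waterRate {A : Finset ι} {w : ℝ} (hw : ∑ i ∈ A, waterPower (N i) w = P) :
    dualBound N P A w = ∑ i ∈ A, waterRate (N i) w := by
  simp only [dualBound, dualTerm, sum_sub_distrib, ← sum_div, hw]
  ring

lemma dualBound_eq_add_sum_sdiff [DecidableEq ι] {A B : Finset ι} (hAB : A ⊆ B) (μ : ℝ) :
    dualBound N P B μ = dualBound N P A μ + ∑ i ∈ B \ A, dualTerm (N i) μ := by
  simp only [dualBound, ← sum_sdiff hAB]
  ring

end Duality

section Submodular

variable {ι : Type*} {N : ι → ℝ} {P : ℝ} {ν : Finset ι → ℝ}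

/-- `R*(A)`, with `ν` any choice of water levels. -/
local notation "R" A => ∑ i ∈ A, waterRate (N i) (ν A)

lemma sum_waterPower_le (hP : 0 < P)
    (hν : ∀ A : Finset ι, A.Nonempty → ∑ i ∈ A, waterPower (N i) (ν A) = P) (A : Finset ι) :
    ∑ i ∈ A, waterPower (N i) (ν A) ≤ P := by
  rcases A.eq_empty_or_nonempty with rfl | hA
  · simpa using hP.le
  · exact (hν A hA).le

lemma waterRate_submodular_of_le [DecidableEq ι] (hN : ∀ i, 0 < N i) (hP : 0 < P)
    (hν : ∀ A : Finset ι, A.Nonempty → ∑ i ∈ A, waterPower (N i) (ν A) = P)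
    {S T : Finset ι} (hS : S.Nonempty) (hT : T.Nonempty) (hST : ν S ≤ ν T) :
    (R (S ∩ T)) + (R (S ∪ T)) ≤ (R S) + (R T) := by
  have hνS : 0 < ν S := pos_of_sum_waterPower_pos hN (hν S hS ▸ hP)
  have hνT : 0 < ν T := pos_of_sum_waterPower_pos hN (hν T hT ▸ hP)
  have hinter := sum_waterRate_le_dualBound N P hN (S ∩ T) hνT (sum_waterPower_le hP hν _)
  have hunion := sum_waterRate_le_dualBound N P hN (S ∪ T) hνS (sum_waterPower_le hP hν _)
  have hsplitT := dualBound_eq_add_sum_sdiff N P (inter_subset_right : S ∩ T ⊆ T) (ν T)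
  have hsplitU := dualBound_eq_add_sum_sdiff N P (subset_union_left : S ⊆ S ∪ T) (ν S)
  rw [dualBound_eq_sum_waterRate N P (hν T hT), sdiff_inter_self_right] at hsplitT
  rw [dualBound_eq_sum_waterRate N P (hν S hS), union_sdiff_left] at hsplitU
  have hmono : ∑ i ∈ T \ S, dualTerm (N i) (ν S) ≤ ∑ i ∈ T \ S, dualTerm (N i) (ν T) :=
    sum_le_sum fun i _ => dualTerm_mono (hN i) hνS hST
  linarith

end Submodular

/-- The waterfilling function `R*` is submodular. -/
theorem stmt_11 {ι : Type*} [DecidableEq ι]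
    (N : ι → ℝ) (hN : ∀ i, 0 < N i) (P : ℝ) (hP : 0 < P)
    (ν : Finset ι → ℝ)
    (hν : ∀ A : Finset ι, A.Nonempty → ∑ i ∈ A, max (ν A - N i) 0 = P)
    (S T : Finset ι) :
    (∑ i ∈ S ∩ T, Real.log (1 + max (ν (S ∩ T) - N i) 0 / N i)) +
      (∑ i ∈ S ∪ T, Real.log (1 + max (ν (S ∪ T) - N i) 0 / N i)) ≤
    (∑ i ∈ S, Real.log (1 + max (ν S - N i) 0 / N i)) +
      (∑ i ∈ T, Real.log (1 + max (ν T - N i) 0 / N i)) := by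
  rcases S.eq_empty_or_nonempty with rfl | hS
  · simp
  rcases T.eq_empty_or_nonempty with rfl | hT
  · simp
  rcases le_total (ν S) (ν T) with hST | hTS
  · exact waterRate_submodular_of_le hN hP hν hS hT hST
  · have hTS := waterRate_submodular_of_le hN hP hν hT hS hTS
    rw [inter_comm, union_comm] at hTS
    unfold waterRate waterPower at hTS
    linarith
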